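/- Let m be a positive integer and let a be an integer with a² ≡ 1 (mod 4m). Define the complex matrices indexed by ZMod (2m): 𝒮_{r r'} = (1/√(2m)) · exp(−2πi r r'/(2m)), 𝒯_{r r'} = exp(2πi r²/(4m)) if r = r' and 0 otherwise (using any integer lift of r; this is well defined since (r + 2m)² ≡ r² mod 4m), and the permutation matrix Ω(a)_{r r'} = 1 if r' = a·r and 0 otherwise. Then Ω(a)·𝒮 = 𝒮·Ω(a) and Ω(a)·𝒯 = 𝒯·Ω(a). -/
import Mathlib


open Complex

/-- The S-matrix of the index-`m` Weil representation:
`𝒮_{r r'} = (1/√(2m))·exp(−2πi r r'/(2m))` (using the canonical lifts). -/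
noncomputable def weilS (m : ℕ) : Matrix (ZMod (2 * m)) (ZMod (2 * m)) ℂ :=
  fun r r' => ((1 : ℂ) / Real.sqrt (2 * m)) *
    Complex.exp (-(2 * Real.pi * Complex.I * ((r.val * r'.val : ℕ) : ℂ)) / (2 * m))

/-- The T-matrix of the index-`m` Weil representation:
diagonal with entries `exp(2πi r²/(4m))` (well defined on residues mod `2m`). -/
noncomputable def weilT (m : ℕ) : Matrix (ZMod (2 * m)) (ZMod (2 * m)) ℂ :=
  fun r r' => if r = r' then
    Complex.exp (2 * Real.pi * Complex.I * ((r.val ^ 2 : ℕ) : ℂ) / (4 * m)) else 0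

/-- The permutation matrix of `r ↦ a·r` on `ZMod (2m)`. -/
def weilOmega (m : ℕ) (a : ℤ) : Matrix (ZMod (2 * m)) (ZMod (2 * m)) ℂ :=
  fun r r' => if r' = (a : ZMod (2 * m)) * r then 1 else 0

/-- If `n ∣ x - y` then `exp(2πi x / n) = exp(2πi y / n)`. -/
lemma weil_exp_congr (n : ℕ) (hn : n ≠ 0) {x y : ℤ} (h : (n : ℤ) ∣ x - y) :
    Complex.exp (2 * Real.pi * Complex.I * (x : ℂ) / n) =
    Complex.exp (2 * Real.pi * Complex.I * (y : ℂ) / n) := by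
  obtain ⟨k, hk⟩ := h
  have hnc : (n : ℂ) ≠ 0 := Nat.cast_ne_zero.mpr hn
  have hx : (x : ℂ) = y + n * k := by
    have : x = y + n * k := by linarith
    rw [this]; push_cast; ring
  have : 2 * Real.pi * Complex.I * (x : ℂ) / n =
      2 * Real.pi * Complex.I * (y : ℂ) / n + (k : ℤ) * (2 * Real.pi * Complex.I) := by
    rw [hx]; field_simp
  rw [this, Complex.exp_add, Complex.exp_int_mul_two_pi_mul_I, mul_one]

/-- Well-definedness of the S-matrix entries modulo `2m`. -/
lemma weil_expS_eq (m : ℕ) [NeZero m] (x y : ℕ) (h : (x : ZMod (2*m)) = y) :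
    Complex.exp (-(2 * Real.pi * Complex.I * (x : ℂ)) / (2 * m)) =
    Complex.exp (-(2 * Real.pi * Complex.I * (y : ℂ)) / (2 * m)) := by
  have hm : (2*m) ≠ 0 := by simp [NeZero.ne m]
  have hd0 : ((2*m : ℕ) : ℤ) ∣ (y : ℤ) - x := ((ZMod.natCast_eq_natCast_iff x y (2*m)).mp h).dvd
  have hd : ((2*m : ℕ) : ℤ) ∣ (-(x:ℤ)) - (-(y:ℤ)) := by convert hd0 using 1; ring
  have e1 : ∀ z : ℕ, -(2 * Real.pi * Complex.I * (z : ℂ)) / (2 * m) =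
      2 * Real.pi * Complex.I * (((-(z:ℤ)) : ℤ) : ℂ) / ((2*m : ℕ) : ℂ) := by
    intro z; push_cast; ring
  rw [e1 x, e1 y]
  exact weil_exp_congr (2*m) hm hd

/-- Well-definedness of the T-matrix entries modulo `4m`. -/
lemma weil_expT_eq (m : ℕ) [NeZero m] (x y : ℕ) (h : ((4*m : ℕ) : ℤ) ∣ (x:ℤ) - y) :
    Complex.exp (2 * Real.pi * Complex.I * (x : ℂ) / (4 * m)) =
    Complex.exp (2 * Real.pi * Complex.I * (y : ℂ) / (4 * m)) := by
  have hm : (4*m) ≠ 0 := by simp [NeZero.ne m]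
  have e1 : ∀ z : ℕ, 2 * Real.pi * Complex.I * (z : ℂ) / (4 * m) =
      2 * Real.pi * Complex.I * (((z:ℤ) : ℤ) : ℂ) / ((4*m : ℕ) : ℂ) := by
    intro z; push_cast; ring
  rw [e1 x, e1 y]
  exact weil_exp_congr (4*m) hm h

/-- for `a² ≡ 1 (mod 4m)`, the permutation matrix `Ω(a)` commutes
with the S- and T-matrices of the index-`m` Weil representation. -/
theorem weilOmega_commutes (m : ℕ) [NeZero m] (a : ℤ)
    (ha : (4 * (m : ℤ)) ∣ a ^ 2 - 1) :
    weilOmega m a * weilS m = weilS m * weilOmega m a ∧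
    weilOmega m a * weilT m = weilT m * weilOmega m a := by
  have haa : (a : ZMod (2 * m)) * a = 1 := by
    have h2 : ((2*m : ℕ) : ℤ) ∣ a * a - 1 := by
      obtain ⟨s, hs⟩ := ha
      exact ⟨2*s, by push_cast; nlinarith⟩
    have h0 : (((a*a - 1 : ℤ)) : ZMod (2*m)) = 0 :=
      (ZMod.intCast_zmod_eq_zero_iff_dvd _ _).mpr h2
    push_cast at h0
    linear_combination h0
  constructor
  · ext r r'
    have hcond : ∀ k : ZMod (2*m), (r' = (a : ZMod (2*m)) * k) ↔ (k = (a : ZMod (2*m)) * r') := by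
      intro k
      constructor
      · intro h; rw [h, ← mul_assoc, haa, one_mul]
      · intro h; rw [h, ← mul_assoc, haa, one_mul]
    simp only [Matrix.mul_apply, weilOmega, weilS, ite_mul, mul_ite, one_mul, zero_mul,
      mul_one, mul_zero, hcond, Finset.sum_ite_eq, Finset.sum_ite_eq', Finset.mem_univ, if_true]
    congr 1
    apply weil_expS_eq
    push_cast [ZMod.natCast_val, ZMod.cast_id]
    ring
  · ext r r'
    have L : (weilOmega m a * weilT m) r r' = weilT m ((a : ZMod (2*m)) * r) r' := by
      simp [Matrix.mul_apply, weilOmega, ite_mul]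
    have R : (weilT m * weilOmega m a) r r' = weilT m r r * weilOmega m a r r' := by
      simp [Matrix.mul_apply, weilT, ite_mul, mul_ite]
    rw [L, R]
    simp only [weilT, weilOmega, if_pos rfl]
    by_cases h : r' = (a : ZMod (2*m)) * r
    · rw [if_pos h.symm, if_pos h, mul_one]
      apply weil_expT_eq
      obtain ⟨t, ht⟩ : ((2*m : ℕ) : ℤ) ∣ ((((a : ZMod (2*m)) * r).val : ℤ) - a * (r.val : ℤ)) := by
        have hc : ((((((a : ZMod (2*m)) * r).val : ℤ) - a * (r.val : ℤ)) : ℤ) : ZMod (2*m)) = 0 := by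
          push_cast [ZMod.natCast_val, ZMod.cast_id]
          ring
        exact (ZMod.intCast_zmod_eq_zero_iff_dvd _ _).mp hc
      obtain ⟨s, hs⟩ := ha
      refine ⟨s * (r.val:ℤ)^2 + t * a * (r.val:ℤ) + m * t^2, ?_⟩
      push_cast at ht hs ⊢
      nlinarith [ht, hs]
    · rw [if_neg (fun hh => h hh.symm), if_neg h, mul_zero]
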